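/- Let x, y be distinct roots with x dom y and y elementary (y dominates no positive root other than itself). Then: (i) r_y x is a positive root; (ii) (r_y x, x) ≤ -1 and (r_y x, y) ≤ -1, so r_y x dominates neither x nor y. -/

import Mathlib

open Real

variable {V : Type*} [AddCommGroup V] [Module ℝ V]

/-- The set of positive linear combinations of a set `A`. -/
def PLC (A : Set V) : Set V :=
  {v | ∃ (s : Finset V) (c : V → ℝ), (↑s : Set V) ⊆ A ∧ (∀ x ∈ s, 0 ≤ c x) ∧
    (∃ x ∈ s, 0 < c x) ∧ v = ∑ x ∈ s, c x • x}

/-- A Coxeter datum (Krammer): a root basis `Pi` in `V` with bilinear form `B`. -/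
structure CoxeterDatum (V : Type*) [AddCommGroup V] [Module ℝ V] where
  B : LinearMap.BilinForm ℝ V
  Pi : Set V
  norm_one : ∀ a ∈ Pi, B a a = 1
  symm : ∀ a ∈ Pi, ∀ b ∈ Pi, B a b = B b a
  offdiag : ∀ a ∈ Pi, ∀ b ∈ Pi, a ≠ b →
    (∃ m : ℕ, 2 ≤ m ∧ B a b = -Real.cos (Real.pi / m)) ∨ B a b ≤ -1
  zero_not_plc : (0 : V) ∉ PLC Pi

namespace CoxeterDatum

variable (D : CoxeterDatum V)

/-- The reflection in the vector `a`, as a linear endomorphism of `V`. -/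
noncomputable def refl (a : V) : Module.End ℝ V where
  toFun x := x - (2 * D.B x a) • a
  map_add' x y := by simp only [map_add, LinearMap.add_apply]; module
  map_smul' c x := by simp only [map_smul, LinearMap.smul_apply, smul_eq_mul,
    RingHom.id_apply]; module

/-- The set of simple reflections, as invertible endomorphisms of `V`. -/
def simples : Set (Module.End ℝ V)ˣ :=
  {u | ∃ a ∈ D.Pi, (u : Module.End ℝ V) = D.refl a}

/-- The Coxeter group `W`, realized as the group generated by the simple reflections. -/
noncomputable def Wgrp : Subgroup (Module.End ℝ V)ˣ := Subgroup.closure D.simples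

/-- The root system. -/
def roots : Set V :=
  {x | ∃ w ∈ D.Wgrp, ∃ a ∈ D.Pi, x = (w : Module.End ℝ V) a}

/-- The positive roots. -/
def posRoots : Set V := D.roots ∩ PLC D.Pi

/-- The negative roots. -/
def negRoots : Set V := {x | -x ∈ D.posRoots}

/-- The length of an element of `W` with respect to the simple reflections. -/
noncomputable def len (w : (Module.End ℝ V)ˣ) : ℕ :=
  sInf {n | ∃ l : List (Module.End ℝ V)ˣ,
    l.length = n ∧ (∀ u ∈ l, u ∈ D.simples) ∧ l.prod = w}

/-- The depth of a root. -/
noncomputable def dp (x : V) : ℕ :=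
  sInf {n | ∃ w ∈ D.Wgrp, D.len w = n ∧ (w : Module.End ℝ V) x ∈ D.negRoots}

/-- Dominance: `x` dominates `y` if every `w ∈ W` making `x` negative makes `y` negative. -/
def dom (x y : V) : Prop :=
  ∀ w ∈ D.Wgrp, (w : Module.End ℝ V) x ∈ D.negRoots → (w : Module.End ℝ V) y ∈ D.negRoots

/-- `D(x)`: the set of positive roots other than `x` dominated by `x`. -/
def DSet (x : V) : Set V := {y | y ∈ D.posRoots ∧ y ≠ x ∧ D.dom x y}

/-- `D_n`: the set of positive roots dominating exactly `n` other positive roots. -/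
def Dn (n : ℕ) : Set V :=
  {x | x ∈ D.posRoots ∧ (D.DSet x).Finite ∧ (D.DSet x).ncard = n}

/-- The set of reflections of `W`. -/
def TSet : Set (Module.End ℝ V)ˣ :=
  {t | ∃ w ∈ D.Wgrp, ∃ s ∈ D.simples, t = w * s * w⁻¹}

/-- `N(w)`: the set of positive roots sent to negative roots by `w`. -/
def NSet (w : (Module.End ℝ V)ˣ) : Set V :=
  {z | z ∈ D.posRoots ∧ (w : Module.End ℝ V) z ∈ D.negRoots}

/-- `N̄(w)`: the reflections `t` with `ℓ(wt) < ℓ(w)`. -/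
def Nbar (w : (Module.End ℝ V)ˣ) : Set (Module.End ℝ V)ˣ :=
  {t | t ∈ D.TSet ∧ D.len (w * t) < D.len w}

/-- The canonical generators of a reflection subgroup `W'`. -/
def canGens (W' : Subgroup (Module.End ℝ V)ˣ) : Set (Module.End ℝ V)ˣ :=
  {t | t ∈ D.TSet ∧ D.Nbar t ∩ (W' : Set (Module.End ℝ V)ˣ) = {t}}

/-- `S(x)`: elements of `W` of minimal length sending `x` into `Π` (inverse-wise). -/
def SSet (x : V) : Set (Module.End ℝ V)ˣ :=
  {w | w ∈ D.Wgrp ∧ D.len w = D.dp x - 1 ∧ ((w⁻¹ : (Module.End ℝ V)ˣ) : Module.End ℝ V) x ∈ D.Pi}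

end CoxeterDatum

/-!
Three facts about a root basis carry the proof.

* Every root is positive or negative (Tits). The classical induction on the length of `w`
  (Humphreys, §5.4) reduces `w a ∈ PLC Π` to a rank-two computation: an alternating product
  `⋯ s_a s_b` sends `a` to a combination of `a` and `b` whose coefficients are Chebyshev values
  `U_n(-(a, b))`, nonnegative as long as the product is reduced.
* If `u` dominates `v` (both positive) then `(u, v) ≥ 1`. If `(u, v) ≤ 0`, then `r_u` makes `u`
  negative but keeps `v` positive. If `(u, v) = cos θ` with `0 < θ < π/2`, the group
  `⟨r_u, r_v⟩` moves the pair `u, v` around a circle of roots at angles `jθ`; dominance propagates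
  along this circle and forces all of them to be positive, but one of them has coefficients of
  opposite signs in `u, v`.
* Applying `r_y` to `x dom y` gives `r_y x dom -y`, and negating, `y dom -r_y x`.

With `c = (x, y) ≥ 1`, `(r_y x, x) = 1 - 2c² ≤ -1` and `(r_y x, y) = -c ≤ -1`, so by the second
fact `r_y x` dominates neither `x` nor `y`. If `r_y x` were negative, `-r_y x` would be a positive
root other than `y` dominated by `y`, which the elementarity of `y` forbids.
-/

open Polynomial.Chebyshev

theorem subset_PLC {A : Set V} : A ⊆ PLC A := fun a ha =>
  ⟨{a}, fun _ => 1, by simpa using ha, by simp, ⟨a, by simp⟩, by simp⟩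

namespace PLC

variable {A : Set V} {u v : V}

theorem add_mem (hu : u ∈ PLC A) (hv : v ∈ PLC A) : u + v ∈ PLC A := by
  classical
  obtain ⟨s, c, hsA, hc, ⟨p, hps, hp⟩, rfl⟩ := hu
  obtain ⟨t, d, htA, hd, -, rfl⟩ := hv
  have extend : ∀ (r : Finset V) (e : V → ℝ), r ⊆ s ∪ t →
      ∑ x ∈ s ∪ t, (if x ∈ r then e x else 0) • x = ∑ x ∈ r, e x • x := fun r e hr => by
    simp_rw [ite_smul, zero_smul]
    rw [Finset.sum_ite_mem, Finset.inter_eq_right.2 hr]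
  have hc' : ∀ x, 0 ≤ if x ∈ s then c x else 0 := fun x => by split_ifs with h <;> simp [hc, h]
  have hd' : ∀ x, 0 ≤ if x ∈ t then d x else 0 := fun x => by split_ifs with h <;> simp [hd, h]
  refine ⟨s ∪ t, fun x => (if x ∈ s then c x else 0) + (if x ∈ t then d x else 0),
    by simpa using And.intro hsA htA, fun x _ => add_nonneg (hc' x) (hd' x),
    ⟨p, Finset.mem_union_left t hps, ?_⟩, ?_⟩
  · simpa [hps] using add_pos_of_pos_of_nonneg hp (hd' p)
  · simp only [add_smul, Finset.sum_add_distrib, extend s c Finset.subset_union_left,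
      extend t d Finset.subset_union_right]

theorem smul_mem {t : ℝ} (ht : 0 < t) (hu : u ∈ PLC A) : t • u ∈ PLC A := by
  obtain ⟨s, c, hsA, hc, ⟨p, hps, hp⟩, rfl⟩ := hu
  exact ⟨s, fun x => t * c x, hsA, fun x hx => mul_nonneg ht.le (hc x hx),
    ⟨p, hps, mul_pos ht hp⟩, by simp only [Finset.smul_sum, mul_smul]⟩

theorem smul_add_smul_mem {α β : ℝ} (hu : u ∈ PLC A) (hv : v ∈ PLC A)
    (hα : 0 ≤ α) (hβ : 0 ≤ β) (hαβ : α ≠ 0 ∨ β ≠ 0) : α • u + β • v ∈ PLC A := by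
  rcases hα.eq_or_lt with rfl | hα
  · simpa using smul_mem (hβ.lt_of_ne' (hαβ.resolve_left (by simp))) hv
  rcases hβ.eq_or_lt with rfl | hβ
  · simpa using smul_mem hα hu
  exact add_mem (smul_mem hα hu) (smul_mem hβ hv)

end PLC

theorem Real.sin_pi_div_pos {m : ℕ} (hm : 2 ≤ m) : 0 < sin (π / m) := by
  have : (2 : ℝ) ≤ m := by exact_mod_cast hm
  apply sin_pos_of_pos_of_lt_pi (by positivity)
  rw [div_lt_iff₀ (by positivity)]
  nlinarith [pi_pos]

namespace Polynomial.Chebyshev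

theorem eval_U_nonneg_of_one_le {t : ℝ} (ht : 1 ≤ t) {n : ℤ} (hn : -1 ≤ n) :
    0 ≤ (U ℝ n).eval t := by
  suffices ∀ n ≥ (-1 : ℤ), 0 ≤ (U ℝ n).eval t ∧ (U ℝ n).eval t ≤ (U ℝ (n + 1)).eval t from
    (this n hn).1
  intro n hn
  induction n, hn using Int.leInduction with
  | base => simp
  | succ n _ ih =>
    rw [add_assoc, one_add_one_eq_two, U_add_two]
    simp only [eval_sub, eval_mul, eval_ofNat, eval_X]
    constructor <;> nlinarith

theorem eval_U_natCast_add_one (t : ℝ) (k : ℕ) :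
    (U ℝ ((k + 1 : ℕ) : ℤ)).eval t = 2 * t * (U ℝ k).eval t - (U ℝ ((k : ℤ) - 1)).eval t := by
  simp [U_add_one]

theorem eval_U_cos_pi_div {m : ℕ} (hm : 2 ≤ m) (n : ℤ) :
    (U ℝ n).eval (cos (π / m)) = sin ((n + 1) * (π / m)) / sin (π / m) :=
  eq_div_of_mul_eq (sin_pi_div_pos hm).ne' (U_real_cos _ n)

theorem eval_U_cos_pi_div_nonneg {m : ℕ} (hm : 2 ≤ m) {n : ℤ} (hn : -1 ≤ n) (hnm : n < m) :
    0 ≤ (U ℝ n).eval (cos (π / m)) := by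
  rw [eval_U_cos_pi_div hm]
  refine div_nonneg (sin_nonneg_of_nonneg_of_le_pi ?_ ?_) (sin_pi_div_pos hm).le
  · have : (-1 : ℝ) ≤ n := by exact_mod_cast hn
    have : 0 < π / m := by positivity
    nlinarith
  · have : (n : ℝ) + 1 ≤ m := by exact_mod_cast hnm
    calc ((n : ℝ) + 1) * (π / m) ≤ m * (π / m) := by gcongr
      _ = π := by field_simp

theorem eval_U_cos_pi_div_two_mul {m : ℕ} (hm : 2 ≤ m) :
    (U ℝ (2 * m)).eval (cos (π / m)) = 1 ∧ (U ℝ (2 * m - 1)).eval (cos (π / m)) = 0 := by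
  have hm0 : (m : ℝ) ≠ 0 := by positivity
  rw [eval_U_cos_pi_div hm, eval_U_cos_pi_div hm]
  push_cast
  rw [show (2 * m + 1 : ℝ) * (π / m) = π / m + 2 * π by field_simp; ring,
    show (2 * m - 1 + 1 : ℝ) * (π / m) = 2 * π by field_simp; ring, sin_add_two_pi, sin_two_pi,
    div_self (sin_pi_div_pos hm).ne', zero_div]
  exact ⟨rfl, rfl⟩

end Polynomial.Chebyshev

theorem exists_sin_nonpos_and_sin_pos {θ : ℝ} (hθ : 0 < θ) (hθπ : θ < π) :
    ∃ n : ℕ, sin (n * θ) ≤ 0 ∧ 0 < sin ((n - 1) * θ) := by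
  have h₁ : π ≤ ⌈π / θ⌉₊ * θ := (div_le_iff₀ hθ).1 (Nat.le_ceil _)
  have h₂ : ⌈π / θ⌉₊ * θ < π + θ := by
    have := Nat.ceil_lt_add_one (div_pos pi_pos hθ).le
    rwa [← lt_div_iff₀ hθ, add_div, div_self hθ.ne']
  refine ⟨⌈π / θ⌉₊, ?_, ?_⟩
  · rw [← sin_sub_two_pi]
    exact sin_nonpos_of_nonpos_of_neg_pi_le (by linarith) (by linarith)
  · exact sin_pos_of_pos_of_lt_pi (by linarith) (by linarith)

namespace CoxeterDatum

variable (D : CoxeterDatum V) {a b u v x y z : V} {w s : (Module.End ℝ V)ˣ} {θ : ℝ}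

/-! ### Reflections and the group `W` -/

theorem neg_notMem_PLC (hv : v ∈ PLC D.Pi) : -v ∉ PLC D.Pi := fun h =>
  D.zero_not_plc (by simpa using PLC.add_mem hv h)

theorem notMem_negRoots (hv : v ∈ D.posRoots) : v ∉ D.negRoots := fun h =>
  D.neg_notMem_PLC hv.2 h.2

theorem neg_mem_negRoots : -v ∈ D.negRoots ↔ v ∈ D.posRoots := by
  simp [negRoots]

theorem refl_apply (a x : V) : D.refl a x = x - (2 * D.B x a) • a := rfl

theorem refl_self (ha : D.B a a = 1) : D.refl a a = -a := by
  rw [refl_apply, ha]; module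

theorem refl_refl (ha : D.B a a = 1) (x : V) : D.refl a (D.refl a x) = x := by
  simp only [refl_apply, map_sub, map_smul, ha]
  module

noncomputable def reflUnit (ha : D.B a a = 1) : (Module.End ℝ V)ˣ :=
  ⟨D.refl a, D.refl a, LinearMap.ext (D.refl_refl ha), LinearMap.ext (D.refl_refl ha)⟩

@[simp] theorem coe_reflUnit (ha : D.B a a = 1) :
    ((D.reflUnit ha : (Module.End ℝ V)ˣ) : Module.End ℝ V) = D.refl a := rfl

theorem reflUnit_mem_simples (ha : a ∈ D.Pi) : D.reflUnit (D.norm_one a ha) ∈ D.simples :=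
  ⟨a, ha, rfl⟩

theorem mul_self_of_mem_simples (hs : s ∈ D.simples) : s * s = 1 := by
  obtain ⟨a, ha, hs⟩ := hs
  ext1
  rw [Units.val_mul, hs, Units.val_one]
  exact LinearMap.ext (D.refl_refl (D.norm_one a ha))

theorem exists_eq_reflUnit_of_mem_simples (hs : s ∈ D.simples) :
    ∃ a, ∃ ha : a ∈ D.Pi, s = D.reflUnit (D.norm_one a ha) :=
  let ⟨a, ha, hs⟩ := hs; ⟨a, ha, Units.ext hs⟩

theorem inv_eq_self_of_mem_simples (hs : s ∈ D.simples) : s⁻¹ = s :=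
  inv_eq_of_mul_eq_one_left (D.mul_self_of_mem_simples hs)

@[elab_as_elim]
theorem Wgrp_induction {p : (Module.End ℝ V)ˣ → Prop} (one : p 1)
    (refl_mul : ∀ a (ha : a ∈ D.Pi), ∀ w ∈ D.Wgrp, p w → p (D.reflUnit (D.norm_one a ha) * w))
    (hw : w ∈ D.Wgrp) : p w := by
  induction hw using Subgroup.closure_induction_left with
  | one => exact one
  | mul_left s hs w hw ih =>
    obtain ⟨a, ha, rfl⟩ := D.exists_eq_reflUnit_of_mem_simples hs
    exact refl_mul a ha w hw ih
  | inv_mul_cancel s hs w hw ih =>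
    rw [D.inv_eq_self_of_mem_simples hs]
    obtain ⟨a, ha, rfl⟩ := D.exists_eq_reflUnit_of_mem_simples hs
    exact refl_mul a ha w hw ih

theorem B_comm_of_mem_span (hu : u ∈ Submodule.span ℝ D.Pi) (hv : v ∈ Submodule.span ℝ D.Pi) :
    D.B u v = D.B v u := by
  induction hu using Submodule.span_induction with
  | mem a ha =>
    induction hv using Submodule.span_induction with
    | mem b hb => exact D.symm a ha b hb
    | zero => simp
    | add x y _ _ hx hy => simp [hx, hy]
    | smul t x _ hx => simp [hx]
  | zero => simp
  | add x y _ _ hx hy => simp [hx, hy]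
  | smul t x _ hx => simp [hx]

theorem refl_mem_span (ha : a ∈ D.Pi) (hu : u ∈ Submodule.span ℝ D.Pi) :
    D.refl a u ∈ Submodule.span ℝ D.Pi :=
  sub_mem hu (Submodule.smul_mem _ _ (Submodule.subset_span ha))

theorem B_refl_refl (ha : a ∈ D.Pi) (v : V) (hu : u ∈ Submodule.span ℝ D.Pi) :
    D.B (D.refl a v) (D.refl a u) = D.B v u := by
  have hau := D.B_comm_of_mem_span (Submodule.subset_span ha) hu
  simp only [refl_apply, map_sub, map_smul, LinearMap.sub_apply, LinearMap.smul_apply,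
    smul_eq_mul, D.norm_one a ha, hau]
  ring

theorem apply_mem_span (hw : w ∈ D.Wgrp) (hu : u ∈ Submodule.span ℝ D.Pi) :
    (w : Module.End ℝ V) u ∈ Submodule.span ℝ D.Pi :=
  D.Wgrp_induction hu (fun _ ha _ _ hw => D.refl_mem_span ha hw) hw

theorem B_apply_apply (hw : w ∈ D.Wgrp) (v : V) (hu : u ∈ Submodule.span ℝ D.Pi) :
    D.B ((w : Module.End ℝ V) v) ((w : Module.End ℝ V) u) = D.B v u := by
  refine D.Wgrp_induction rfl (fun a ha w hw hw' => ?_) hw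
  rw [Units.val_mul, Module.End.mul_apply, Module.End.mul_apply, coe_reflUnit,
      D.B_refl_refl ha _ (D.apply_mem_span hw hu), hw']

theorem apply_mem_roots (hw : w ∈ D.Wgrp) (hz : z ∈ D.roots) :
    (w : Module.End ℝ V) z ∈ D.roots := by
  obtain ⟨w', hw', a, ha, rfl⟩ := hz
  exact ⟨w * w', mul_mem hw hw', a, ha, rfl⟩

theorem mem_span_of_mem_roots (hz : z ∈ D.roots) : z ∈ Submodule.span ℝ D.Pi := by
  obtain ⟨w, hw, a, ha, rfl⟩ := hz
  exact D.apply_mem_span hw (Submodule.subset_span ha)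

theorem B_self_of_mem_roots (hz : z ∈ D.roots) : D.B z z = 1 := by
  obtain ⟨w, hw, a, ha, rfl⟩ := hz
  rw [D.B_apply_apply hw a (Submodule.subset_span ha), D.norm_one a ha]

theorem B_comm_of_mem_roots (hx : x ∈ D.roots) (hy : y ∈ D.roots) : D.B x y = D.B y x :=
  D.B_comm_of_mem_span (D.mem_span_of_mem_roots hx) (D.mem_span_of_mem_roots hy)

theorem reflUnit_mem_Wgrp (hz : z ∈ D.roots) : D.reflUnit (D.B_self_of_mem_roots hz) ∈ D.Wgrp := by
  obtain ⟨w, hw, a, ha, rfl⟩ := hz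
  have hconj : D.reflUnit (D.B_self_of_mem_roots ⟨w, hw, a, ha, rfl⟩)
      = w * D.reflUnit (D.norm_one a ha) * w⁻¹ := by
    ext1; refine LinearMap.ext fun v => ?_
    obtain ⟨v, rfl⟩ : ∃ v', (w : Module.End ℝ V) v' = v :=
      ⟨((w⁻¹ : (Module.End ℝ V)ˣ) : Module.End ℝ V) v, by simp [← Module.End.mul_apply]⟩
    simp only [Units.val_mul, Module.End.mul_apply, coe_reflUnit, refl_apply, map_sub, map_smul,
      D.B_apply_apply hw v (Submodule.subset_span ha)]
    simp [← Module.End.mul_apply]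
  rw [hconj]
  exact mul_mem (mul_mem hw (Subgroup.subset_closure (D.reflUnit_mem_simples ha))) (inv_mem hw)

theorem refl_mem_roots (hy : y ∈ D.roots) (hx : x ∈ D.roots) : D.refl y x ∈ D.roots :=
  D.apply_mem_roots (D.reflUnit_mem_Wgrp hy) hx

theorem neg_mem_roots (hz : z ∈ D.roots) : -z ∈ D.roots := by
  simpa [D.refl_self (D.B_self_of_mem_roots hz)] using D.refl_mem_roots hz hz

/-! ### Length -/

theorem len_prod_le {l : List (Module.End ℝ V)ˣ} (hl : ∀ u ∈ l, u ∈ D.simples) :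
    D.len l.prod ≤ l.length :=
  Nat.sInf_le ⟨l, rfl, hl, rfl⟩

theorem exists_reduced_word (hw : w ∈ D.Wgrp) :
    ∃ l : List (Module.End ℝ V)ˣ, (∀ u ∈ l, u ∈ D.simples) ∧ l.prod = w ∧ l.length = D.len w := by
  have hne : ∃ n l, List.length l = n ∧ (∀ u ∈ l, u ∈ D.simples) ∧ l.prod = w := by
    refine D.Wgrp_induction ⟨0, [], rfl, by simp, rfl⟩ (fun a ha w _ ⟨_, l, _, hl, hlw⟩ => ?_) hw
    exact ⟨_, _ :: l, rfl, List.forall_mem_cons.2 ⟨D.reflUnit_mem_simples ha, hl⟩, by simp [hlw]⟩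
  obtain ⟨l, hlen, hl, hlw⟩ := Nat.sInf_mem hne
  exact ⟨l, hl, hlw, hlen⟩

theorem len_mul_simple_le (hw : w ∈ D.Wgrp) (hs : s ∈ D.simples) :
    D.len (w * s) ≤ D.len w + 1 := by
  obtain ⟨l, hl, rfl, hlen⟩ := D.exists_reduced_word hw
  simpa [hlen] using D.len_prod_le (l := l ++ [s]) (by simpa [or_imp, forall_and] using ⟨hl, hs⟩)

theorem len_le_len_mul_simple_add_one (hw : w ∈ D.Wgrp) (hs : s ∈ D.simples) :
    D.len w ≤ D.len (w * s) + 1 := by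
  simpa [mul_assoc, D.mul_self_of_mem_simples hs] using
    D.len_mul_simple_le (mul_mem hw (Subgroup.subset_closure hs)) hs

theorem eq_one_or_exists_len_mul_lt (hw : w ∈ D.Wgrp) :
    w = 1 ∨ ∃ b, ∃ hb : b ∈ D.Pi, D.len (w * D.reflUnit (D.norm_one b hb)) < D.len w := by
  obtain ⟨l, hl, rfl, hlen⟩ := D.exists_reduced_word hw
  rcases l.eq_nil_or_concat with rfl | ⟨l, s, rfl⟩
  · exact Or.inl rfl
  obtain ⟨hl', hs⟩ : (∀ u ∈ l, u ∈ D.simples) ∧ s ∈ D.simples := by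
    simpa [or_imp, forall_and] using hl
  obtain ⟨b, hb, rfl⟩ := D.exists_eq_reflUnit_of_mem_simples hs
  refine Or.inr ⟨b, hb, ?_⟩
  rw [← hlen, List.prod_concat, mul_assoc, D.mul_self_of_mem_simples hs, mul_one,
    List.length_concat]
  exact Nat.lt_succ_of_le (D.len_prod_le hl')

/-! ### Rank two -/

section Dihedral

variable (ha : a ∈ D.Pi) (hb : b ∈ D.Pi)

noncomputable def altLetter (k : ℕ) : (Module.End ℝ V)ˣ :=
  if Even k then D.reflUnit (D.norm_one b hb) else D.reflUnit (D.norm_one a ha)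

/-- `altWord ha hb k = ⋯ s_b s_a s_b`, the alternating product of `k` simple reflections whose
rightmost factor is `s_b`. -/
noncomputable def altWord : ℕ → (Module.End ℝ V)ˣ
  | 0 => 1
  | k + 1 => D.altLetter ha hb k * altWord k

theorem altLetter_mem_simples (k : ℕ) : D.altLetter ha hb k ∈ D.simples := by
  unfold altLetter; split_ifs; exacts [D.reflUnit_mem_simples hb, D.reflUnit_mem_simples ha]

theorem altWord_mem_Wgrp (k : ℕ) : D.altWord ha hb k ∈ D.Wgrp := by
  induction k with
  | zero => exact one_mem _
  | succ k ih => exact mul_mem (Subgroup.subset_closure (D.altLetter_mem_simples ha hb k)) ih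

theorem altWord_apply_left (k : ℕ) :
    (D.altWord ha hb k : Module.End ℝ V) a =
      if Even k then (U ℝ k).eval (-D.B a b) • a + (U ℝ ((k : ℤ) - 1)).eval (-D.B a b) • b
      else (U ℝ ((k : ℤ) - 1)).eval (-D.B a b) • a + (U ℝ k).eval (-D.B a b) • b := by
  induction k with
  | zero => simp [altWord]
  | succ k ih =>
    have hk : ((k + 1 : ℕ) : ℤ) - 1 = k := by push_cast; ring
    rw [altWord, Units.val_mul, Module.End.mul_apply, ih, altLetter, hk, eval_U_natCast_add_one]
    by_cases h : Even k
    · simp only [h, Nat.even_add_one, not_true_eq_false, if_true, if_false, coe_reflUnit,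
        map_add, map_smul, refl_apply, D.norm_one b hb]
      module
    · simp only [h, Nat.even_add_one, not_false_eq_true, if_true, if_false, coe_reflUnit,
        map_add, map_smul, refl_apply, D.norm_one a ha, D.symm b hb a ha]
      module

theorem altWord_apply_of_B_eq_zero {v : V} (hva : D.B v a = 0) (hvb : D.B v b = 0) (k : ℕ) :
    (D.altWord ha hb k : Module.End ℝ V) v = v := by
  induction k with
  | zero => rfl
  | succ k ih =>
    rw [altWord, Units.val_mul, Module.End.mul_apply, ih, altLetter]
    split_ifs <;> simp [refl_apply, hva, hvb]

theorem altWord_two_mul (m : ℕ) :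
    D.altWord ha hb (2 * m) =
      (D.reflUnit (D.norm_one a ha) * D.reflUnit (D.norm_one b hb)) ^ m := by
  induction m with
  | zero => rfl
  | succ m ih =>
    have h2m : Even (2 * m) := even_two_mul m
    rw [show 2 * (m + 1) = 2 * m + 1 + 1 by ring, altWord, altWord, ih, altLetter, altLetter,
      if_neg (by simp), if_pos h2m, pow_succ', mul_assoc]

theorem altWord_two_mul_swap (m : ℕ) :
    D.altWord hb ha (2 * m) = (D.altWord ha hb (2 * m))⁻¹ := by
  rw [altWord_two_mul, altWord_two_mul, ← inv_pow, mul_inv_rev,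
    D.inv_eq_self_of_mem_simples (D.reflUnit_mem_simples ha),
    D.inv_eq_self_of_mem_simples (D.reflUnit_mem_simples hb)]

theorem altWord_two_mul_apply_left {m : ℕ} (hm : 2 ≤ m) (hab : D.B a b = -cos (π / m)) :
    (D.altWord ha hb (2 * m) : Module.End ℝ V) a = a := by
  obtain ⟨h1, h0⟩ := eval_U_cos_pi_div_two_mul hm
  rw [altWord_apply_left, if_pos (even_two_mul m), hab, neg_neg]
  push_cast
  rw [h1, h0, one_smul, zero_smul, add_zero]

theorem altWord_two_mul_eq_one {m : ℕ} (hm : 2 ≤ m) (hab : D.B a b = -cos (π / m)) :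
    D.altWord ha hb (2 * m) = 1 := by
  set x := D.altWord ha hb (2 * m)
  set c := D.B a b
  have hba : D.B b a = c := D.symm b hb a ha
  have hxa : (x : Module.End ℝ V) a = a := D.altWord_two_mul_apply_left ha hb hm hab
  have hxb : (x : Module.End ℝ V) b = b := by
    have h := D.altWord_two_mul_apply_left hb ha hm (hba.trans hab)
    rw [D.altWord_two_mul_swap] at h
    conv_lhs => rw [← h]
    simp [x, ← Module.End.mul_apply]
  have hc : 1 - c ^ 2 ≠ 0 := by
    have := sin_sq_add_cos_sq (π / m)
    have := sin_pi_div_pos hm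
    rw [hab]; nlinarith
  ext1; refine LinearMap.ext fun v => ?_
  set l := (D.B v a - c * D.B v b) / (1 - c ^ 2)
  set μ := (D.B v b - c * D.B v a) / (1 - c ^ 2)
  have hv₀ := D.altWord_apply_of_B_eq_zero ha hb (v := v - l • a - μ • b) ?_ ?_ (2 * m)
  · rw [map_sub, map_sub, map_smul, map_smul, hxa, hxb, sub_left_inj, sub_left_inj] at hv₀
    simpa using hv₀
  all_goals
    simp only [map_sub, map_smul, LinearMap.sub_apply, LinearMap.smul_apply, smul_eq_mul,
      D.norm_one a ha, D.norm_one b hb, hba, l, μ]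
    field_simp
    ring

theorem altWord_eq_altLetter_mul (k : ℕ) :
    D.altWord ha hb k = D.altLetter ha hb k * D.altWord ha hb (k + 1) := by
  rw [altWord, ← mul_assoc, D.mul_self_of_mem_simples (D.altLetter_mem_simples ha hb k), one_mul]

theorem len_mul_altWord_mul_le {m : ℕ} (hx : D.altWord ha hb (2 * m) = 1) (d : ℕ) :
    ∀ k, k + d + 1 = 2 * m → ∀ g ∈ D.Wgrp,
      D.len (g * D.altWord ha hb k * D.reflUnit (D.norm_one a ha)) ≤ D.len g + d := by
  induction d with
  | zero =>
    intro k hk g _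
    have hodd : ¬ Even k := Nat.even_add_one.mp (hk ▸ even_two_mul m)
    rw [D.altWord_eq_altLetter_mul, hk, hx, altLetter, if_neg hodd, mul_one, mul_assoc,
      D.mul_self_of_mem_simples (D.reflUnit_mem_simples ha), mul_one, add_zero]
  | succ d ih =>
    intro k hk g hg
    have hs := D.altLetter_mem_simples ha hb k
    calc D.len (g * D.altWord ha hb k * D.reflUnit (D.norm_one a ha))
        = D.len (g * D.altLetter ha hb k * D.altWord ha hb (k + 1) *
            D.reflUnit (D.norm_one a ha)) := by
          rw [D.altWord_eq_altLetter_mul]; simp only [mul_assoc]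
      _ ≤ D.len (g * D.altLetter ha hb k) + d :=
        ih (k + 1) (by omega) _ (mul_mem hg (Subgroup.subset_closure hs))
      _ ≤ D.len g + (d + 1) := by linarith [D.len_mul_simple_le hg hs]

theorem mul_altWord_apply_mem_PLC (hab : a ≠ b) {k : ℕ}
    (hk : ∀ m : ℕ, 2 ≤ m → D.B a b = -cos (π / m) → k < m) {v : (Module.End ℝ V)ˣ}
    (hva : (v : Module.End ℝ V) a ∈ PLC D.Pi) (hvb : (v : Module.End ℝ V) b ∈ PLC D.Pi) :
    ((v * D.altWord ha hb k : (Module.End ℝ V)ˣ) : Module.End ℝ V) a ∈ PLC D.Pi := by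
  have hU : ∀ n : ℤ, -1 ≤ n → n ≤ k → 0 ≤ (U ℝ n).eval (-D.B a b) := by
    rcases D.offdiag a ha b hb hab with ⟨m, hm, hc⟩ | hc
    · intro n h1 h2
      rw [hc, neg_neg]
      exact eval_U_cos_pi_div_nonneg hm h1 (by have := hk m hm hc; omega)
    · exact fun n h1 _ => eval_U_nonneg_of_one_le (by linarith) h1
  obtain ⟨p, q, hp, hq, hx⟩ : ∃ p q : ℝ, 0 ≤ p ∧ 0 ≤ q ∧
      (D.altWord ha hb k : Module.End ℝ V) a = p • a + q • b := by
    rw [altWord_apply_left]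
    split_ifs
    · exact ⟨_, _, hU k (by omega) le_rfl, hU (k - 1) (by omega) (by omega), rfl⟩
    · exact ⟨_, _, hU (k - 1) (by omega) (by omega), hU k (by omega) le_rfl, rfl⟩
  have hpq : p ≠ 0 ∨ q ≠ 0 := by
    by_contra! h
    rw [h.1, h.2, zero_smul, zero_smul, add_zero,
      ← map_zero (D.altWord ha hb k : Module.End ℝ V)] at hx
    have hinj := ((Module.End.isUnit_iff _).1 (D.altWord ha hb k).isUnit).1
    exact D.zero_not_plc (hinj hx ▸ subset_PLC ha)
  rw [Units.val_mul, Module.End.mul_apply, hx, map_add, map_smul, map_smul]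
  exact PLC.smul_add_smul_mem hva hvb hp hq hpq

theorem and_of_altLetter_of_altLetter_succ {P : (Module.End ℝ V)ˣ → Prop} (k : ℕ)
    (h₀ : P (D.altLetter ha hb k))
    (h₁ : P (D.altLetter ha hb (k + 1))) :
    P (D.reflUnit (D.norm_one a ha)) ∧ P (D.reflUnit (D.norm_one b hb)) := by
  unfold altLetter at h₀ h₁
  by_cases hk : Even k
  · rw [if_pos hk] at h₀
    rw [if_neg (by simpa [Nat.even_add_one] using hk)] at h₁
    exact ⟨h₁, h₀⟩
  · rw [if_neg hk] at h₀
    rw [if_pos (Nat.even_add_one.2 hk)] at h₁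
    exact ⟨h₀, h₁⟩

/-- Splits off from `w` the longest alternating suffix `⋯ s_a s_b` that shortens `w` letter by
letter; what is left, `w * (altWord ha hb k)⁻¹`, is lengthened by both `s_a` and `s_b`. -/
theorem exists_altWord_split (hw : w ∈ D.Wgrp)
    (hwb : D.len (w * D.reflUnit (D.norm_one b hb)) < D.len w) :
    ∃ k, 0 < k ∧ (∀ j ≤ k, D.len (w * (D.altWord ha hb j)⁻¹) + j = D.len w) ∧
      D.len (w * (D.altWord ha hb k)⁻¹) ≤
        D.len (w * (D.altWord ha hb k)⁻¹ * D.reflUnit (D.norm_one a ha)) ∧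
      D.len (w * (D.altWord ha hb k)⁻¹) ≤
        D.len (w * (D.altWord ha hb k)⁻¹ * D.reflUnit (D.norm_one b hb)) := by
  set P : ℕ → Prop := fun j => D.len (w * (D.altWord ha hb j)⁻¹) + j = D.len w
  have hstep : ∀ j, w * (D.altWord ha hb (j + 1))⁻¹ =
      w * (D.altWord ha hb j)⁻¹ * D.altLetter ha hb j := fun j => by
    rw [altWord, mul_inv_rev, D.inv_eq_self_of_mem_simples (D.altLetter_mem_simples ha hb j),
      mul_assoc]
  have hP1 : P 1 := by
    have := D.len_le_len_mul_simple_add_one hw (D.reflUnit_mem_simples hb)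
    have h1 : D.altWord ha hb 1 = D.reflUnit (D.norm_one b hb) := by simp [altWord, altLetter]
    simp only [P, h1, D.inv_eq_self_of_mem_simples (D.reflUnit_mem_simples hb)]
    omega
  have hex : ∃ k, ¬ P (k + 1) := ⟨D.len w, by simp only [P]; omega⟩
  obtain ⟨k, hfind⟩ : ∃ k, Nat.find hex = k + 1 :=
    Nat.exists_eq_add_one_of_ne_zero fun h => Nat.find_spec hex (h ▸ hP1)
  have hPk : ∀ j ≤ k + 1, P j := by
    rintro (_ | j) hj
    · simp [P, altWord]
    · exact not_not.1 (Nat.find_min hex (by omega))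
  have hnP : ¬ P (k + 2) := by have := Nat.find_spec hex; rwa [hfind] at this
  have hk : P (k + 1) := hPk (k + 1) le_rfl
  have hk' : P k := hPk k (by omega)
  have hback : w * (D.altWord ha hb (k + 1))⁻¹ * D.altLetter ha hb k =
      w * (D.altWord ha hb k)⁻¹ := by
    rw [hstep k, mul_assoc, D.mul_self_of_mem_simples (D.altLetter_mem_simples ha hb k), mul_one]
  refine ⟨k + 1, k.succ_pos, hPk, D.and_of_altLetter_of_altLetter_succ ha hb
    (P := fun s => D.len (w * (D.altWord ha hb (k + 1))⁻¹) ≤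
      D.len (w * (D.altWord ha hb (k + 1))⁻¹ * s)) k ?_ ?_⟩
  · simp only [P] at hk hk'
    rw [hback]
    omega
  · have hv := mul_mem hw (inv_mem (D.altWord_mem_Wgrp ha hb (k + 1)))
    have := D.len_le_len_mul_simple_add_one hv (D.altLetter_mem_simples ha hb (k + 1))
    simp only [P, hstep (k + 1)] at hnP ⊢
    omega

end Dihedral

/-! ### Every root is positive or negative -/

theorem apply_mem_PLC_of_len_le (hw : w ∈ D.Wgrp) (ha : a ∈ D.Pi)
    (hlen : D.len w ≤ D.len (w * D.reflUnit (D.norm_one a ha))) :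
    (w : Module.End ℝ V) a ∈ PLC D.Pi := by
  induction hn : D.len w using Nat.strong_induction_on generalizing w a with
  | _ n ih =>
  obtain rfl | ⟨b, hb, hwb⟩ := D.eq_one_or_exists_len_mul_lt hw
  · exact subset_PLC ha
  have hab : a ≠ b := by rintro rfl; exact absurd hlen (not_le.2 hwb)
  obtain ⟨k, hk0, hsplit, hva, hvb⟩ := D.exists_altWord_split ha hb hw hwb
  have hv := mul_mem hw (inv_mem (D.altWord_mem_Wgrp ha hb k))
  have hlt : D.len (w * (D.altWord ha hb k)⁻¹) < n := by
    have := hsplit k le_rfl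
    omega
  -- if `k ≥ m`, the braid relation `(s_a s_b) ^ m = 1` would make `w * s_a` shorter than `w`
  have hk : ∀ m : ℕ, 2 ≤ m → D.B a b = -cos (π / m) → k < m := by
    intro m hm hc
    by_contra! hmk
    have hshort := D.len_mul_altWord_mul_le ha hb (D.altWord_two_mul_eq_one ha hb hm hc)
      (m - 1) m (by omega) _ (mul_mem hw (inv_mem (D.altWord_mem_Wgrp ha hb m)))
    rw [inv_mul_cancel_right] at hshort
    have hm' := hsplit m hmk
    omega
  simpa using D.mul_altWord_apply_mem_PLC ha hb hab hk (ih _ hlt hv ha hva rfl)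
    (ih _ hlt hv hb hvb rfl)

theorem mem_posRoots_or_mem_negRoots (hz : z ∈ D.roots) : z ∈ D.posRoots ∨ z ∈ D.negRoots := by
  obtain ⟨w, hw, a, ha, rfl⟩ := hz
  set s := D.reflUnit (D.norm_one a ha)
  rcases le_or_gt (D.len w) (D.len (w * s)) with h | h
  · exact Or.inl ⟨⟨w, hw, a, ha, rfl⟩, D.apply_mem_PLC_of_len_le hw ha h⟩
  · refine Or.inr ⟨D.neg_mem_roots ⟨w, hw, a, ha, rfl⟩, ?_⟩
    have hws := mul_mem hw (Subgroup.subset_closure (D.reflUnit_mem_simples ha))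
    have hs : w * s * s = w := by
      rw [mul_assoc, D.mul_self_of_mem_simples (D.reflUnit_mem_simples ha), mul_one]
    simpa [s, D.refl_self (D.norm_one a ha)] using
      D.apply_mem_PLC_of_len_le hws ha (hs.symm ▸ h.le)

/-! ### Dominance -/

theorem mem_posRoots_of_dom (hx : x ∈ D.roots) (hy : y ∈ D.posRoots) (h : D.dom x y) :
    x ∈ D.posRoots :=
  (D.mem_posRoots_or_mem_negRoots hx).resolve_right fun hneg =>
    D.notMem_negRoots hy (by simpa using h 1 (one_mem _) (by simpa using hneg))

theorem dom_apply (hw : w ∈ D.Wgrp) (h : D.dom x y) :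
    D.dom ((w : Module.End ℝ V) x) ((w : Module.End ℝ V) y) := fun w' hw' hwx => by
  simpa using h (w' * w) (mul_mem hw' hw) (by simpa using hwx)

theorem dom_neg_neg (hx : x ∈ D.roots) (h : D.dom x y) : D.dom (-y) (-x) := by
  intro w hw hwy
  rw [map_neg, neg_mem_negRoots] at hwy ⊢
  refine (D.mem_posRoots_or_mem_negRoots (D.apply_mem_roots hw hx)).resolve_right fun hwx => ?_
  exact D.notMem_negRoots hwy (h w hw hwx)

theorem not_dom_of_B_nonpos (hu : u ∈ D.posRoots) (hv : v ∈ D.posRoots) (huv : D.B u v ≤ 0) :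
    ¬ D.dom u v := by
  intro h
  have hr := D.reflUnit_mem_Wgrp hu.1
  have hru : D.refl u u ∈ D.negRoots := by
    rw [D.refl_self (D.B_self_of_mem_roots hu.1), neg_mem_negRoots]; exact hu
  refine D.notMem_negRoots ⟨D.refl_mem_roots hu.1 hv.1, ?_⟩ (h _ hr hru)
  rw [show D.refl u v = (1 : ℝ) • v + (-(2 * D.B v u)) • u by rw [refl_apply]; module]
  refine PLC.smul_add_smul_mem hv.2 hu.2 zero_le_one ?_ (Or.inl one_ne_zero)
  rw [D.B_comm_of_mem_roots hv.1 hu.1]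
  linarith

/-- The vector at angle `j * θ` from `u` in the plane of `u` and `v`, `θ` being the angle from `u`
to `v`. -/
noncomputable def dihedralSeq (θ : ℝ) (u v : V) (j : ℤ) : V :=
  (sin ((1 - j) * θ) / sin θ) • u + (sin (j * θ) / sin θ) • v

theorem dihedralSeq_zero (hθ : sin θ ≠ 0) : dihedralSeq θ u v 0 = u := by
  simp [dihedralSeq, div_self hθ]

theorem dihedralSeq_one (hθ : sin θ ≠ 0) : dihedralSeq θ u v 1 = v := by
  simp [dihedralSeq, div_self hθ]

theorem B_dihedralSeq_left (huu : D.B u u = 1) (hvu : D.B v u = cos θ) (hθ : sin θ ≠ 0) (j : ℤ) :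
    D.B (dihedralSeq θ u v j) u = cos (j * θ) := by
  simp only [dihedralSeq, map_add, map_smul, LinearMap.add_apply, LinearMap.smul_apply,
    smul_eq_mul, huu, hvu]
  rw [show (1 - (j : ℝ)) * θ = θ - j * θ by ring, sin_sub]
  field_simp
  ring

theorem B_dihedralSeq_right (hvv : D.B v v = 1) (huv : D.B u v = cos θ) (hθ : sin θ ≠ 0) (j : ℤ) :
    D.B (dihedralSeq θ u v j) v = cos ((1 - j) * θ) := by
  simp only [dihedralSeq, map_add, map_smul, LinearMap.add_apply, LinearMap.smul_apply,
    smul_eq_mul, hvv, huv]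
  rw [show (1 - (j : ℝ)) * θ = θ - j * θ by ring, sin_sub, cos_sub]
  field_simp
  linear_combination (-sin (j * θ)) * sin_sq_add_cos_sq θ

theorem refl_dihedralSeq_left (huu : D.B u u = 1) (hvu : D.B v u = cos θ) (hθ : sin θ ≠ 0)
    (j : ℤ) : D.refl u (dihedralSeq θ u v j) = -dihedralSeq θ u v (-j) := by
  rw [refl_apply, D.B_dihedralSeq_left huu hvu hθ j]
  unfold dihedralSeq
  push_cast
  match_scalars
  · rw [show (1 - (j : ℝ)) * θ = θ - j * θ by ring, show (1 - -(j : ℝ)) * θ = j * θ + θ by ring,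
      sin_sub, sin_add]
    field_simp
    ring
  · rw [neg_mul, sin_neg]
    ring

theorem refl_dihedralSeq_right (hvv : D.B v v = 1) (huv : D.B u v = cos θ) (hθ : sin θ ≠ 0)
    (j : ℤ) : D.refl v (dihedralSeq θ u v j) = -dihedralSeq θ u v (2 - j) := by
  rw [refl_apply, D.B_dihedralSeq_right hvv huv hθ j]
  unfold dihedralSeq
  push_cast
  match_scalars
  · rw [show (1 - (2 - (j : ℝ))) * θ = -((1 - j) * θ) by ring, sin_neg]
    ring
  · rw [show (2 - (j : ℝ)) * θ = θ + (θ - j * θ) by ring,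
      show (1 - (j : ℝ)) * θ = θ - j * θ by ring, sin_add, sin_sub, cos_sub]
    field_simp
    linear_combination (-sin (j * θ)) * sin_sq_add_cos_sq θ

theorem pow_apply_dihedralSeq (huu : D.B u u = 1) (hvv : D.B v v = 1) (huv : D.B u v = cos θ)
    (hvu : D.B v u = cos θ) (hθ : sin θ ≠ 0) (k : ℕ) (j : ℤ) :
    (((D.reflUnit huu * D.reflUnit hvv) ^ k : (Module.End ℝ V)ˣ) : Module.End ℝ V)
      (dihedralSeq θ u v j) = dihedralSeq θ u v (j - 2 * k) := by
  induction k generalizing j with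
  | zero => simp
  | succ k ih =>
    rw [pow_succ, Units.val_mul, Module.End.mul_apply, Units.val_mul, Module.End.mul_apply,
      coe_reflUnit, coe_reflUnit, D.refl_dihedralSeq_right hvv huv hθ, map_neg,
      D.refl_dihedralSeq_left huu hvu hθ, neg_neg, ih]
    push_cast
    ring_nf

theorem dom_dihedralSeq (hu : u ∈ D.posRoots) (hv : v ∈ D.posRoots) (h : D.dom u v)
    (huv : D.B u v = cos θ) (hθ : sin θ ≠ 0) (d : ℕ) :
    dihedralSeq θ u v (-d) ∈ D.roots ∧
      D.dom (dihedralSeq θ u v (-d)) (dihedralSeq θ u v (1 - d)) := by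
  have huu := D.B_self_of_mem_roots hu.1
  have hvv := D.B_self_of_mem_roots hv.1
  have hvu : D.B v u = cos θ := (D.B_comm_of_mem_roots hv.1 hu.1).trans huv
  have hρX := D.pow_apply_dihedralSeq huu hvv huv hvu hθ
  have hru := D.reflUnit_mem_Wgrp hu.1
  have hρ : D.reflUnit huu * D.reflUnit hvv ∈ D.Wgrp := mul_mem hru (D.reflUnit_mem_Wgrp hv.1)
  set ρ := D.reflUnit huu * D.reflUnit hvv
  set X := dihedralSeq θ u v
  obtain ⟨k, rfl | rfl⟩ := Nat.even_or_odd' d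
  · set g := ρ ^ k
    have hg : g ∈ D.Wgrp := pow_mem hρ k
    have hu' : (g : Module.End ℝ V) u = X (-(2 * k : ℕ)) := by
      rw [← dihedralSeq_zero (u := u) (v := v) hθ, hρX]; push_cast; ring_nf
    have hv' : (g : Module.End ℝ V) v = X (1 - (2 * k : ℕ)) := by
      rw [← dihedralSeq_one (u := u) (v := v) hθ, hρX]; push_cast; ring_nf
    rw [← hu', ← hv']
    exact ⟨D.apply_mem_roots hg hu.1, D.dom_apply hg h⟩
  · set g := ρ ^ k * D.reflUnit huu
    have hg : g ∈ D.Wgrp := mul_mem (pow_mem hρ k) hru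
    have hu' : (g : Module.End ℝ V) u = -X (1 - (2 * k + 1 : ℕ)) := by
      rw [Units.val_mul, Module.End.mul_apply, coe_reflUnit, D.refl_self huu, map_neg,
        ← dihedralSeq_zero (u := u) (v := v) hθ, hρX]
      push_cast; ring_nf
    have hv' : (g : Module.End ℝ V) v = -X (-(2 * k + 1 : ℕ)) := by
      rw [Units.val_mul, Module.End.mul_apply, coe_reflUnit,
        ← dihedralSeq_one (u := u) (v := v) hθ, D.refl_dihedralSeq_left huu hvu hθ, map_neg, hρX]
      push_cast; ring_nf
    have hdom := D.dom_neg_neg (D.apply_mem_roots hg hu.1) (D.dom_apply hg h)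
    rw [hu', hv', neg_neg, neg_neg] at hdom
    refine ⟨?_, hdom⟩
    simpa [hv'] using D.neg_mem_roots (D.apply_mem_roots hg hv.1)

theorem dihedralSeq_mem_posRoots (hu : u ∈ D.posRoots) (hv : v ∈ D.posRoots) (h : D.dom u v)
    (huv : D.B u v = cos θ) (hθ : sin θ ≠ 0) (d : ℕ) :
    dihedralSeq θ u v (1 - d) ∈ D.posRoots := by
  induction d with
  | zero => simpa [dihedralSeq_one hθ] using hv
  | succ d ih =>
    obtain ⟨hroot, hdom⟩ := D.dom_dihedralSeq hu hv h huv hθ d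
    rw [show (1 : ℤ) - ((d + 1 : ℕ) : ℤ) = -d by push_cast; ring]
    exact D.mem_posRoots_of_dom hroot ih hdom

theorem one_le_B_of_dom (hu : u ∈ D.posRoots) (hv : v ∈ D.posRoots) (h : D.dom u v) :
    1 ≤ D.B u v := by
  by_contra! hlt
  have hpos : 0 < D.B u v := by
    by_contra! hle
    exact D.not_dom_of_B_nonpos hu hv hle h
  set θ := arccos (D.B u v)
  have hθ : 0 < θ := arccos_pos.2 hlt
  have hθπ : θ < π := arccos_lt_pi.2 (by linarith)
  have hsin : 0 < sin θ := sin_pos_of_pos_of_lt_pi hθ hθπ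
  have hX := D.dihedralSeq_mem_posRoots hu hv h (cos_arccos (by linarith) hlt.le).symm hsin.ne'
  obtain ⟨n, hn, hn'⟩ := exists_sin_nonpos_and_sin_pos hθ hθπ
  apply D.neg_notMem_PLC (hX n).2
  have hXn : -dihedralSeq θ u v (1 - n) =
      (-(sin (n * θ) / sin θ)) • u + (sin ((n - 1) * θ) / sin θ) • v := by
    rw [dihedralSeq]
    push_cast
    rw [show (1 - (1 - n : ℝ)) * θ = n * θ by ring, show (1 - n : ℝ) * θ = -((n - 1) * θ) by ring,
      sin_neg]
    module
  rw [hXn]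
  refine PLC.smul_add_smul_mem hu.2 hv.2 ?_ (div_pos hn' hsin).le (Or.inr (div_pos hn' hsin).ne')
  exact neg_nonneg.2 (div_nonpos_of_nonpos_of_nonneg hn hsin.le)

end CoxeterDatum

theorem refl_of_dominated_elementary_general (D : CoxeterDatum V) {x y : V}
    (hx : x ∈ D.roots) (hne : x ≠ y) (hdom : D.dom x y)
    (hypos : y ∈ D.posRoots) (hyelem : D.DSet y = ∅) :
    D.refl y x ∈ D.posRoots ∧
    D.B (D.refl y x) x ≤ -1 ∧ D.B (D.refl y x) y ≤ -1 ∧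
    ¬ D.dom (D.refl y x) x ∧ ¬ D.dom (D.refl y x) y := by
  have hy := hypos.1
  have hyy := D.B_self_of_mem_roots hy
  have hxpos := D.mem_posRoots_of_dom hx hypos hdom
  have hxy := D.one_le_B_of_dom hxpos hypos hdom
  have hzx : D.B (D.refl y x) x = 1 - 2 * D.B x y ^ 2 := by
    simp only [D.refl_apply, map_sub, map_smul, LinearMap.sub_apply, LinearMap.smul_apply,
      smul_eq_mul, D.B_self_of_mem_roots hx, D.B_comm_of_mem_roots hy hx]
    ring
  have hzy : D.B (D.refl y x) y = -D.B x y := by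
    simp only [D.refl_apply, map_sub, map_smul, LinearMap.sub_apply, LinearMap.smul_apply,
      smul_eq_mul, hyy]
    ring
  have hz := D.refl_mem_roots hy hx
  have hzpos : D.refl y x ∈ D.posRoots := by
    refine (D.mem_posRoots_or_mem_negRoots hz).resolve_right fun hzneg => ?_
    have hne' : -D.refl y x ≠ y := fun h => hne <| by
      rw [← D.refl_refl hyy x, neg_eq_iff_eq_neg.1 h, map_neg, D.refl_self hyy, neg_neg]
    have hdom' : D.dom y (-D.refl y x) := by
      simpa [D.refl_self hyy] using D.dom_neg_neg hz (D.dom_apply (D.reflUnit_mem_Wgrp hy) hdom)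
    exact (hyelem ▸ ⟨hzneg, hne', hdom'⟩ : -D.refl y x ∈ (∅ : Set V))
  exact ⟨hzpos, by nlinarith, by linarith, D.not_dom_of_B_nonpos hzpos hxpos (by nlinarith),
    D.not_dom_of_B_nonpos hzpos hypos (by linarith)⟩

/-- Lemma 3.3: reflecting a dominating root in a dominated elementary root. -/
theorem refl_of_dominated_elementary (D : CoxeterDatum V) {x y : V}
    (hx : x ∈ D.roots) (hy : y ∈ D.roots) (hne : x ≠ y) (hdom : D.dom x y)
    (hypos : y ∈ D.posRoots) (hyelem : D.DSet y = ∅) :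
    D.refl y x ∈ D.posRoots ∧
    D.B (D.refl y x) x ≤ -1 ∧ D.B (D.refl y x) y ≤ -1 ∧
    ¬ D.dom (D.refl y x) x ∧ ¬ D.dom (D.refl y x) y :=
  refl_of_dominated_elementary_general D hx hne hdom hypos hyelem
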